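/- Let H be a d-lightweight initialization of the subdivided graph G′, and let e = uv be an edge of G′ not contained in H. Then there exist at least c·d^{1/2} vertices x of G′ (for a universal constant c > 0) with d_H(u,x) ≤ w(e). Moreover, for every ε′ ∈ (0,1] there exist at least ε′·w(e)/2 vertices x of G′ with d_H(u,x) ≤ ε′·w(e). -/

import Mathlib

open scoped ENNReal Classical

/-- The total weight of a walk: the sum of the weights of its edges. -/
noncomputable def walkWeight {V : Type} (G : SimpleGraph V) (w : Sym2 V → ℝ≥0∞)
    {s t : V} (p : G.Walk s t) : ℝ≥0∞ :=
  (p.edges.map w).sum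

/-- Shortest-path distance in the weighted graph `(G, w)`, equal to `⊤` if there is no path. -/
noncomputable def gdist {V : Type} (G : SimpleGraph V) (w : Sym2 V → ℝ≥0∞)
    (s t : V) : ℝ≥0∞ :=
  ⨅ p : G.Walk s t, walkWeight G w p

/-- The maximum edge weight along a walk (0 for the trivial walk). -/
noncomputable def maxEdge {V : Type} (G : SimpleGraph V) (w : Sym2 V → ℝ≥0∞)
    {s t : V} (p : G.Walk s t) : ℝ≥0∞ :=
  (p.edges.map w).foldr max 0

/-- `π` assigns to each ordered vertex pair a shortest path: a walk whose total
weight equals the shortest-path distance. -/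
def IsShortestPathScheme {V : Type} (G : SimpleGraph V) (w : Sym2 V → ℝ≥0∞)
    (π : (s t : V) → G.Walk s t) : Prop :=
  ∀ s t : V, walkWeight G w (π s t) = gdist G w s t

/-- The edge weights are positive and finite on all edges of `G`. -/
def PosWeights {V : Type} (G : SimpleGraph V) (w : Sym2 V → ℝ≥0∞) : Prop :=
  ∀ e ∈ G.edgeSet, 0 < w e ∧ w e ≠ ⊤

/-- `H` is a `d`-lightweight initialization of `(G', w)` relative to a spanning tree `T`
(the MST of the subdivided graph), witnessed by the selection `S`: starting from `T`, for
each vertex `v` the non-tree edges incident to `v` are added one by one in nondecreasing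
order of weight for as long as the total weight added for `v` remains at most `d`. -/
def IsDLightweightInit {V : Type} [Fintype V] (G' T : SimpleGraph V) (w : Sym2 V → ℝ≥0∞)
    (d : ℝ) (H : SimpleGraph V) (S : V → Finset V) : Prop :=
  (∀ v : V, ∀ u ∈ S v, G'.Adj v u ∧ ¬ T.Adj v u) ∧
  (∀ v : V, ∑ u ∈ S v, w s(v, u) ≤ ENNReal.ofReal d) ∧
  (∀ v u : V, G'.Adj v u → ¬ T.Adj v u → u ∉ S v →
      (∀ x ∈ S v, w s(v, x) ≤ w s(v, u)) ∧
      ENNReal.ofReal d < (∑ x ∈ S v, w s(v, x)) + w s(v, u)) ∧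
  (∀ a b : V, H.Adj a b ↔ T.Adj a b ∨ (G'.Adj a b ∧ (b ∈ S a ∨ a ∈ S b)))

/-- `(G', w)` models the subdivided graph of the lightweight-spanner construction: it is
connected with positive finite edge weights, every edge has weight less than the number of
vertices (edges of weight ≥ n were removed and subdividing only adds vertices), and `T` is
a spanning tree of `G'` (the subdivided MST) all of whose edges have weight at most `1`. -/
def IsSubdividedSetting {V : Type} [Fintype V] (G' T : SimpleGraph V)
    (w : Sym2 V → ℝ≥0∞) : Prop :=
  G'.Connected ∧ PosWeights G' w ∧
  (∀ e ∈ G'.edgeSet, w e < (Fintype.card V : ℝ≥0∞)) ∧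
  T ≤ G' ∧ T.Connected ∧ T.IsAcyclic ∧
  (∀ e ∈ T.edgeSet, w e ≤ 1)

/-!
Both bounds come from balls around `u` in the spanning tree `T ⊆ H`. Since `T` is connected
and its edges weigh at most `1`, a ball of radius `r < n` grows by at least one vertex per unit
of radius until it is everything, so it holds at least `r` vertices; this gives the
`ε'`-bound, and the first bound when `√d ≤ w(e)`. If instead `w(e) < √d`, then `e` was rejected
by the greedy selection at `u`: every selected edge is no heavier than `e` and the budget `d`
would have been exceeded, so `d < (|S u| + 1)·w(e) < (|S u| + 1)·√d`, and `u` together with its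
selected neighbours gives `√d` vertices within distance `w(e)` of `u`.
-/

open SimpleGraph Finset

section Distance

variable {V : Type} {G H : SimpleGraph V} (w : Sym2 V → ℝ≥0∞)

lemma gdist_le_walkWeight {s t : V} (p : G.Walk s t) : gdist G w s t ≤ walkWeight G w p :=
  iInf_le _ p

lemma gdist_self (u : V) : gdist G w u u = 0 :=
  nonpos_iff_eq_zero.mp <| (gdist_le_walkWeight w Walk.nil).trans_eq (by simp [walkWeight])

lemma gdist_le_of_adj {s t : V} (h : G.Adj s t) : gdist G w s t ≤ w s(s, t) :=
  (gdist_le_walkWeight w (Walk.cons h Walk.nil)).trans_eq (by simp [walkWeight])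

lemma gdist_le_add_of_adj {u x y : V} (h : G.Adj x y) :
    gdist G w u y ≤ gdist G w u x + w s(x, y) := by
  rw [gdist.eq_1 G w u x, ENNReal.iInf_add]
  refine le_iInf fun p => ?_
  calc gdist G w u y ≤ walkWeight G w (p.append (Walk.cons h Walk.nil)) :=
        gdist_le_walkWeight w _
    _ = walkWeight G w p + w s(x, y) := by simp [walkWeight, Walk.edges_append]

lemma gdist_antitone_graph (hGH : G ≤ H) (s t : V) : gdist H w s t ≤ gdist G w s t := by
  refine le_iInf fun p => ?_
  have hp : ∀ e ∈ p.edges, e ∈ H.edgeSet := fun e he =>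
    edgeSet_mono hGH (p.edges_subset_edgeSet he)
  calc gdist H w s t ≤ walkWeight H w (p.transfer H hp) := gdist_le_walkWeight w _
    _ = walkWeight G w p := by simp [walkWeight, Walk.edges_transfer]

end Distance

section Ball

variable {V : Type} [Fintype V] {G H : SimpleGraph V} {w : Sym2 V → ℝ≥0∞}

noncomputable def gdistBall (G : SimpleGraph V) (w : Sym2 V → ℝ≥0∞) (u : V) (r : ℝ≥0∞) :
    Finset V :=
  univ.filter fun x => gdist G w u x ≤ r

lemma mem_gdistBall {u x : V} {r : ℝ≥0∞} : x ∈ gdistBall G w u r ↔ gdist G w u x ≤ r := by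
  simp [gdistBall]

lemma gdistBall_mono {u : V} {r s : ℝ≥0∞} (hrs : r ≤ s) : gdistBall G w u r ⊆ gdistBall G w u s :=
  fun _ hx => mem_gdistBall.mpr ((mem_gdistBall.mp hx).trans hrs)

lemma gdistBall_subset_of_le (hGH : G ≤ H) (u : V) (r : ℝ≥0∞) :
    gdistBall G w u r ⊆ gdistBall H w u r :=
  fun x hx => mem_gdistBall.mpr ((gdist_antitone_graph w hGH u x).trans (mem_gdistBall.mp hx))

lemma min_card_le_card_gdistBall_natCast (hG : G.Connected) (hw : ∀ e ∈ G.edgeSet, w e ≤ 1)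
    (u : V) (k : ℕ) : min (Fintype.card V) (k + 1) ≤ #(gdistBall G w u k) := by
  induction k with
  | zero =>
    have : u ∈ gdistBall G w u (0 : ℕ) := mem_gdistBall.mpr (by simp [gdist_self])
    have := card_pos.mpr ⟨u, this⟩
    omega
  | succ k ih =>
    have hsub : gdistBall G w u k ⊆ gdistBall G w u (k + 1 : ℕ) :=
      gdistBall_mono (by exact_mod_cast k.le_succ)
    by_cases hfull : gdistBall G w u k = univ
    · have := card_le_card hsub
      rw [hfull, card_univ] at this
      omega
    obtain ⟨b, hb⟩ := not_forall.mp fun h => hfull (eq_univ_of_forall h)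
    have hu : u ∈ gdistBall G w u k := mem_gdistBall.mpr (by simp [gdist_self])
    obtain ⟨⟨⟨x, y⟩, hxy⟩, -, hx, hy⟩ :=
      ((hG.preconnected u b).some).exists_boundary_dart {z | z ∈ gdistBall G w u k} hu hb
    -- the ball can only be left along an edge of weight at most `1`
    have hy' : y ∈ gdistBall G w u (k + 1 : ℕ) := by
      refine mem_gdistBall.mpr ((gdist_le_add_of_adj w hxy).trans ?_)
      push_cast
      exact add_le_add (mem_gdistBall.mp hx) (hw _ hxy)
    have := card_lt_card ((ssubset_iff_of_subset hsub).mpr ⟨y, hy', hy⟩)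
    omega

lemma le_card_gdistBall (hG : G.Connected) (hw : ∀ e ∈ G.edgeSet, w e ≤ 1) (hGH : G ≤ H)
    (u : V) {r : ℝ≥0∞} (hr : r < Fintype.card V) : r ≤ #(gdistBall H w u r) := by
  have hr_top : r ≠ ⊤ := ne_top_of_lt hr
  set k := ⌊r.toReal⌋₊
  have hk : (k : ℝ≥0∞) ≤ r := by
    rw [← ENNReal.ofReal_toReal hr_top, ← ENNReal.ofReal_natCast]
    exact ENNReal.ofReal_le_ofReal (Nat.floor_le ENNReal.toReal_nonneg)
  have hrk : r ≤ (k + 1 : ℕ) := by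
    rw [← ENNReal.ofReal_toReal hr_top, ← ENNReal.ofReal_natCast]
    exact ENNReal.ofReal_le_ofReal (by exact_mod_cast (Nat.lt_floor_add_one r.toReal).le)
  calc r ≤ (min (Fintype.card V) (k + 1) : ℕ) :=
        (le_min hr.le hrk).trans_eq Nat.mono_cast.map_min.symm
    _ ≤ #(gdistBall G w u k) := by
        exact_mod_cast min_card_le_card_gdistBall_natCast hG hw u k
    _ ≤ #(gdistBall H w u r) := by
        exact_mod_cast card_le_card
          ((gdistBall_mono hk).trans (gdistBall_subset_of_le hGH u r))

end Ball

namespace IsDLightweightInit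

variable {V : Type} [Fintype V] {G' T H : SimpleGraph V} {w : Sym2 V → ℝ≥0∞} {d : ℝ}
  {S : V → Finset V}

lemma tree_le (h : IsDLightweightInit G' T w d H S) : T ≤ H :=
  fun {a b} hab => (h.2.2.2 a b).mpr (Or.inl hab)

lemma adj_of_mem (h : IsDLightweightInit G' T w d H S) {u x : V} (hx : x ∈ S u) : H.Adj u x :=
  (h.2.2.2 u x).mpr (Or.inr ⟨(h.1 u x hx).1, Or.inl hx⟩)

lemma card_insert_self (h : IsDLightweightInit G' T w d H S) (u : V) :
    #(insert u (S u)) = #(S u) + 1 :=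
  card_insert_of_notMem fun hu => G'.irrefl (h.1 u u hu).1

variable {u v : V}

lemma greedy_rejection (h : IsDLightweightInit G' T w d H S) (huv : G'.Adj u v)
    (hH : ¬ H.Adj u v) :
    (∀ x ∈ S u, w s(u, x) ≤ w s(u, v)) ∧
      ENNReal.ofReal d < ∑ x ∈ S u, w s(u, x) + w s(u, v) :=
  h.2.2.1 u v huv (fun hT => hH (h.tree_le hT)) fun hv => hH (h.adj_of_mem hv)

lemma ofReal_lt_card_mul (h : IsDLightweightInit G' T w d H S) (huv : G'.Adj u v)
    (hH : ¬ H.Adj u v) : ENNReal.ofReal d < (#(S u) + 1 : ℕ) * w s(u, v) := by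
  obtain ⟨hle, hlt⟩ := h.greedy_rejection huv hH
  calc ENNReal.ofReal d < ∑ x ∈ S u, w s(u, x) + w s(u, v) := hlt
    _ ≤ #(S u) * w s(u, v) + w s(u, v) := by
        grw [sum_le_card_nsmul _ _ _ hle, nsmul_eq_mul]
    _ = (#(S u) + 1 : ℕ) * w s(u, v) := by push_cast; ring

lemma gdist_le_of_mem_insert (h : IsDLightweightInit G' T w d H S) (huv : G'.Adj u v)
    (hH : ¬ H.Adj u v) {x : V} (hx : x ∈ insert u (S u)) : gdist H w u x ≤ w s(u, v) := by
  rcases mem_insert.mp hx with rfl | hxS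
  · simp [gdist_self]
  · exact (gdist_le_of_adj w (h.adj_of_mem hxS)).trans ((h.greedy_rejection huv hH).1 x hxS)

end IsDLightweightInit

/-- Let `H` be a `d`-lightweight initialization of the subdivided graph
`G'`, and let `e = uv` be an edge of `G'` not contained in `H`. Then there are at least
`c·√d` vertices `x` (for a universal constant `c > 0`) with `d_H(u,x) ≤ w(e)`; moreover,
for every `ε' ∈ (0,1]` there are at least `ε'·w(e)/2` vertices `x` with
`d_H(u,x) ≤ ε'·w(e)`. -/
theorem lightweight_init_neighborhood :
    ∃ c : ℝ, 0 < c ∧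
      ∀ (V : Type) [Fintype V] (G' T : SimpleGraph V) (w : Sym2 V → ℝ≥0∞),
        IsSubdividedSetting G' T w →
        ∀ (d : ℝ), 0 ≤ d →
        ∀ (H : SimpleGraph V) (S : V → Finset V), IsDLightweightInit G' T w d H S →
        ∀ u v : V, G'.Adj u v → ¬ H.Adj u v →
          (∃ N : Finset V, ENNReal.ofReal (c * Real.sqrt d) ≤ (N.card : ℝ≥0∞) ∧
            ∀ x ∈ N, gdist H w u x ≤ w s(u, v)) ∧
          ∀ ε' : ℝ, 0 < ε' → ε' ≤ 1 →
            ∃ N : Finset V, ENNReal.ofReal ε' * w s(u, v) / 2 ≤ (N.card : ℝ≥0∞) ∧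
              ∀ x ∈ N, gdist H w u x ≤ ENNReal.ofReal ε' * w s(u, v) := by
  refine ⟨1, one_pos, fun V _ G' T w hset d hd H S hinit u v huv hH => ?_⟩
  obtain ⟨-, -, hw_card, -, hTconn, -, hw1⟩ := hset
  have hw_lt : w s(u, v) < Fintype.card V := hw_card _ huv
  have ball_bound : ∀ {r : ℝ≥0∞}, r < Fintype.card V → r ≤ #(gdistBall H w u r) :=
    le_card_gdistBall hTconn hw1 hinit.tree_le u
  refine ⟨?_, fun ε' _ hε1 => ⟨gdistBall H w u (ENNReal.ofReal ε' * w s(u, v)), ?_,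
    fun x hx => mem_gdistBall.mp hx⟩⟩
  · rw [one_mul]
    by_cases hsqrt : ENNReal.ofReal √d ≤ w s(u, v)
    · exact ⟨gdistBall H w u (w s(u, v)), hsqrt.trans (ball_bound hw_lt),
        fun x hx => mem_gdistBall.mp hx⟩
    refine ⟨insert u (S u), ?_, fun x => hinit.gdist_le_of_mem_insert huv hH⟩
    rw [hinit.card_insert_self]
    have hd_sq : ENNReal.ofReal d = ENNReal.ofReal √d * ENNReal.ofReal √d := by
      rw [← ENNReal.ofReal_mul (Real.sqrt_nonneg d), Real.mul_self_sqrt hd]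
    have hlt := hd_sq ▸ hinit.ofReal_lt_card_mul huv hH
    -- `√d · √d < m · w(e)` with `w(e) < √d` forces `√d ≤ m`
    by_contra! hm
    exact (mul_le_mul' hm.le (not_le.mp hsqrt).le).not_gt hlt
  · have hr : ENNReal.ofReal ε' * w s(u, v) ≤ w s(u, v) :=
      mul_le_of_le_one_left' (ENNReal.ofReal_le_one.mpr hε1)
    exact ENNReal.half_le_self.trans (ball_bound (hr.trans_lt hw_lt))
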